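/- The function H(α) = [(α² - 2)K(α) + 3E(α)]·K(α), where K and E are the complete elliptic integrals of the first and second kind, satisfies H(0) = π²/4 and is strictly monotonically decreasing on (0,1), with H(α) → -∞ as α → 1⁻. -/

import Mathlib

open Real Asymptotics

noncomputable section

/-- Complete elliptic integral of the first kind. -/
def Kc (α : ℝ) : ℝ := ∫ θ in (0:ℝ)..(π/2), 1 / Real.sqrt (1 - α^2 * Real.sin θ ^ 2)

/-- Complete elliptic integral of the second kind. -/
def Ec (α : ℝ) : ℝ := ∫ θ in (0:ℝ)..(π/2), Real.sqrt (1 - α^2 * Real.sin θ ^ 2)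

/-- The function H(α) = [(α²-2)K(α) + 3E(α)]·K(α). -/
def Hfun (α : ℝ) : ℝ := ((α^2 - 2) * Kc α + 3 * Ec α) * Kc α

namespace EllipticAux

/-- w a θ = 1 - a² sin² θ -/
def w (a θ : ℝ) : ℝ := 1 - a^2 * Real.sin θ ^ 2

lemma w_lower {a : ℝ} (θ : ℝ) : 1 - a^2 ≤ w a θ := by
  have h1 : Real.sin θ ^ 2 ≤ 1 := Real.sin_sq_le_one θ
  have h2 : (0:ℝ) ≤ a^2 := sq_nonneg a
  simp only [w]
  nlinarith [mul_le_of_le_one_right h2 h1]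

lemma w_pos {a : ℝ} (ha : a^2 < 1) (θ : ℝ) : 0 < w a θ :=
  lt_of_lt_of_le (by linarith) (w_lower θ)

lemma w_le_one {a : ℝ} (θ : ℝ) : w a θ ≤ 1 := by
  have : 0 ≤ a^2 * Real.sin θ ^ 2 := by positivity
  simp [w]; linarith

lemma sqrt_w_pos {a : ℝ} (ha : a^2 < 1) (θ : ℝ) : 0 < Real.sqrt (w a θ) :=
  Real.sqrt_pos.2 (w_pos ha θ)

lemma sq_sqrt_w {a : ℝ} (ha : a^2 < 1) (θ : ℝ) : Real.sqrt (w a θ) ^ 2 = w a θ :=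
  Real.sq_sqrt (w_pos ha θ).le

lemma cont_w {a : ℝ} : Continuous (w a) := by
  unfold w; continuity

lemma cont_sqrt_w {a : ℝ} : Continuous (fun θ => Real.sqrt (w a θ)) :=
  cont_w.sqrt

lemma cont_inv_sqrt_w {a : ℝ} (ha : a^2 < 1) :
    Continuous (fun θ => (Real.sqrt (w a θ))⁻¹) :=
  cont_sqrt_w.inv₀ (fun θ => (sqrt_w_pos ha θ).ne')

end EllipticAux
namespace EllipticAux

open intervalIntegral MeasureTheory

lemma intgK {a : ℝ} (ha : a^2 < 1) (c d : ℝ) :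
    IntervalIntegrable (fun θ => (Real.sqrt (w a θ))⁻¹) volume c d :=
  (cont_inv_sqrt_w ha).intervalIntegrable c d

lemma intgE {a : ℝ} (c d : ℝ) :
    IntervalIntegrable (fun θ => Real.sqrt (w a θ)) volume c d :=
  cont_sqrt_w.intervalIntegrable c d

lemma Kc_eq (a : ℝ) : Kc a = ∫ θ in (0:ℝ)..(π/2), (Real.sqrt (w a θ))⁻¹ := by
  unfold Kc w; simp [one_div]

lemma Ec_eq (a : ℝ) : Ec a = ∫ θ in (0:ℝ)..(π/2), Real.sqrt (w a θ) := rfl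

lemma Kc_ge {a : ℝ} (ha : a^2 < 1) : π/2 ≤ Kc a := by
  rw [Kc_eq]
  calc π/2 = ∫ _ in (0:ℝ)..(π/2), (1:ℝ) := by simp
    _ ≤ ∫ θ in (0:ℝ)..(π/2), (Real.sqrt (w a θ))⁻¹ := by
        apply intervalIntegral.integral_mono_on (by positivity)
          (intervalIntegrable_const) (intgK ha 0 (π/2))
        intro θ _
        rw [one_le_inv_iff₀]
        exact ⟨sqrt_w_pos ha θ, Real.sqrt_le_one.2 (w_le_one θ)⟩

lemma Ec_le (a : ℝ) : Ec a ≤ π/2 := by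
  rw [Ec_eq]
  calc (∫ θ in (0:ℝ)..(π/2), Real.sqrt (w a θ))
      ≤ ∫ _ in (0:ℝ)..(π/2), (1:ℝ) := by
        apply intervalIntegral.integral_mono_on (by positivity) (intgE 0 (π/2))
          intervalIntegrable_const
        intro θ _
        exact Real.sqrt_le_one.2 (w_le_one θ)
    _ = π/2 := by simp

end EllipticAux
namespace EllipticAux

open intervalIntegral MeasureTheory

lemma mul_inv_sqrt_w {a : ℝ} (ha : a^2 < 1) (θ : ℝ) :
    w a θ * (Real.sqrt (w a θ))⁻¹ = Real.sqrt (w a θ) := by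
  rw [← Real.mul_self_sqrt (w_pos ha θ).le]
  rw [Real.sqrt_mul_self (Real.sqrt_nonneg _), mul_assoc, mul_inv_cancel₀ (sqrt_w_pos ha θ).ne', mul_one]

lemma K_sub_E_pos {a : ℝ} (ha0 : 0 < a) (ha : a^2 < 1) : 0 < Kc a - Ec a := by
  rw [Kc_eq, Ec_eq, ← intervalIntegral.integral_sub (intgK ha 0 (π/2)) (intgE 0 (π/2))]
  apply intervalIntegral.intervalIntegral_pos_of_pos_on
    (((cont_inv_sqrt_w ha).sub cont_sqrt_w).intervalIntegrable 0 (π/2))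
  · intro θ hθ
    have hs : 0 < Real.sin θ :=
      Real.sin_pos_of_pos_of_lt_pi hθ.1 (lt_trans hθ.2 (by linarith [pi_pos]))
    have hw1 : w a θ < 1 := by
      have : 0 < a^2 * Real.sin θ^2 := by positivity
      simp only [w]; linarith
    have h1 : Real.sqrt (w a θ) < 1 := by
      rw [← Real.sqrt_one]; exact Real.sqrt_lt_sqrt (w_pos ha θ).le hw1
    have h2 : 1 < (Real.sqrt (w a θ))⁻¹ := (one_lt_inv_iff₀).2 ⟨sqrt_w_pos ha θ, h1⟩
    simp only [Pi.sub_apply]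
    linarith
  · positivity

lemma E_sub_K_pos {a : ℝ} (ha0 : 0 < a) (ha : a^2 < 1) :
    0 < Ec a - (1 - a^2) * Kc a := by
  rw [Kc_eq, Ec_eq, ← intervalIntegral.integral_const_mul,
    ← intervalIntegral.integral_sub (intgE 0 (π/2)) ((intgK ha 0 (π/2)).const_mul _)]
  apply intervalIntegral.intervalIntegral_pos_of_pos_on
    ((cont_sqrt_w.sub (continuous_const.mul (cont_inv_sqrt_w ha))).intervalIntegrable 0 (π/2))
  · intro θ hθ
    have hc : 0 < Real.cos θ := Real.cos_pos_of_mem_Ioo ⟨by linarith [hθ.1, pi_pos], hθ.2⟩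
    have hw : 1 - a^2 < w a θ := by
      simp only [w]
      nlinarith [Real.sin_sq_add_cos_sq θ, mul_pos (mul_pos ha0 ha0) (mul_pos hc hc)]
    have := mul_lt_mul_of_pos_right hw (inv_pos.2 (sqrt_w_pos ha θ))
    rw [mul_inv_sqrt_w ha θ] at this
    simp only [Pi.sub_apply, Pi.mul_apply]
    linarith
  · positivity

lemma refl_neg {a : ℝ} (ha0 : 0 < a) (ha : a^2 < 1) :
    ∫ θ in (0:ℝ)..(π/2), (1 - 2*Real.sin θ^2) * (Real.sqrt (w a θ))⁻¹ < 0 := by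
  set f : ℝ → ℝ := fun θ => (1 - 2*Real.sin θ^2) * (Real.sqrt (w a θ))⁻¹ with hf
  have hcont : Continuous f := by
    apply Continuous.mul (by continuity) (cont_inv_sqrt_w ha)
  have hcont2 : Continuous (fun θ => f (π/2 - θ)) := hcont.comp (by continuity)
  have hsplit : (∫ θ in (0:ℝ)..(π/4), f θ) + (∫ θ in (π/4:ℝ)..(π/2), f θ)
      = ∫ θ in (0:ℝ)..(π/2), f θ :=
    intervalIntegral.integral_add_adjacent_intervals
      (hcont.intervalIntegrable 0 (π/4)) (hcont.intervalIntegrable (π/4) (π/2))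
  have hrefl : (∫ θ in (0:ℝ)..(π/4), f (π/2 - θ)) = ∫ θ in (π/4:ℝ)..(π/2), f θ := by
    rw [intervalIntegral.integral_comp_sub_left f (π/2)]
    norm_num
    congr 1
    ring
  have hneg : 0 < ∫ θ in (0:ℝ)..(π/4), -(f θ + f (π/2 - θ)) := by
    apply intervalIntegral.intervalIntegral_pos_of_pos_on
      (((hcont.add hcont2).neg).intervalIntegrable 0 (π/4))
    · intro θ hθ
      have hpi : 0 < π := pi_pos
      have hs0 : 0 < Real.sin θ :=
        Real.sin_pos_of_pos_of_lt_pi hθ.1 (by nlinarith [hθ.2])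
      have hsc : Real.sin θ < Real.cos θ := by
        rw [← Real.sin_pi_div_two_sub]
        apply Real.strictMonoOn_sin ⟨by linarith [hθ.1], by linarith [hθ.2]⟩
          ⟨by nlinarith [hθ.2], by linarith [hθ.1]⟩ (by linarith [hθ.2])
      have hsq : Real.sin θ ^ 2 < Real.cos θ ^ 2 := by nlinarith
      have hw' : w a (π/2 - θ) < w a θ := by
        simp only [w, Real.sin_pi_div_two_sub]
        nlinarith [mul_pos ha0 ha0, hsq]
      have hwpos' : 0 < w a (π/2 - θ) := w_pos ha _
      have hsqlt : Real.sqrt (w a (π/2-θ)) < Real.sqrt (w a θ) :=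
        Real.sqrt_lt_sqrt hwpos'.le hw'
      have hinv : (Real.sqrt (w a θ))⁻¹ < (Real.sqrt (w a (π/2-θ)))⁻¹ :=
        inv_strictAnti₀ (sqrt_w_pos ha _) hsqlt
      have hcos2 : 0 < 1 - 2*Real.sin θ^2 := by nlinarith [Real.sin_sq_add_cos_sq θ]
      have hkey : f (π/2 - θ) = -((1 - 2*Real.sin θ^2) * (Real.sqrt (w a (π/2-θ)))⁻¹) := by
        simp only [hf, Real.sin_pi_div_two_sub]
        have hpy := Real.sin_sq_add_cos_sq θ
        have hh : 1 - 2*Real.cos θ^2 = -(1 - 2*Real.sin θ^2) := by linarith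
        rw [hh]; ring
      simp only [Pi.neg_apply, Pi.add_apply]
      rw [hkey]
      simp only [hf]
      have := mul_lt_mul_of_pos_left hinv hcos2
      linarith
    · positivity
  rw [intervalIntegral.integral_neg, neg_pos,
    intervalIntegral.integral_add (hcont.intervalIntegrable _ _)
      (hcont2.intervalIntegrable _ _), hrefl, hsplit] at hneg
  exact hneg

end EllipticAux
namespace EllipticAux

open intervalIntegral MeasureTheory

lemma cont_inv_sqrt_w_cube {a : ℝ} (ha : a^2 < 1) :
    Continuous (fun θ => ((Real.sqrt (w a θ))⁻¹)^3) :=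
  (cont_inv_sqrt_w ha).pow 3

lemma hasDerivAt_g {a : ℝ} (ha : a^2 < 1) (θ : ℝ) :
    HasDerivAt (fun x => a^2 * Real.sin x * Real.cos x * (Real.sqrt (w a x))⁻¹)
      ((a^2 - 1) * ((Real.sqrt (w a θ))⁻¹)^3 + Real.sqrt (w a θ)) θ := by
  have hw := w_pos ha θ
  have hs := sqrt_w_pos ha θ
  have hdw : HasDerivAt (fun x => w a x) (-(2*a^2*Real.sin θ*Real.cos θ)) θ := by
    simp only [w]
    have h1 : HasDerivAt (fun x : ℝ => Real.sin x) (Real.cos θ) θ := Real.hasDerivAt_sin θ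
    have h2 := (((h1.fun_pow 2).const_mul (a^2)).const_sub 1)
    convert h2 using 1
    · rfl
    · rfl
    ring
  have hdsqrt : HasDerivAt (fun x => Real.sqrt (w a x))
      (-(2*a^2*Real.sin θ*Real.cos θ) / (2 * Real.sqrt (w a θ))) θ := hdw.sqrt hw.ne'
  have hdinv : HasDerivAt (fun x => (Real.sqrt (w a x))⁻¹)
      (a^2*Real.sin θ*Real.cos θ * ((Real.sqrt (w a θ))⁻¹)^3) θ := by
    have := hdsqrt.fun_inv hs.ne'
    convert this using 1
    · rfl
    · rfl
    have hs2 : Real.sqrt (w a θ) ^ 2 = w a θ := sq_sqrt_w ha θ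
    field_simp
  have h1 : HasDerivAt (fun x => a^2 * Real.sin x * Real.cos x)
      (a^2 * (Real.cos θ^2 - Real.sin θ^2)) θ := by
    have := ((Real.hasDerivAt_sin θ).fun_mul (Real.hasDerivAt_cos θ)).const_mul (a^2)
    convert this using 1
    · rfl
    · rfl
    · ext x; ring
    · ring
  have hmul := h1.fun_mul hdinv
  convert hmul using 1
  · rfl
  · rfl
  have hs2 : Real.sqrt (w a θ) ^ 2 = w a θ := sq_sqrt_w ha θ
  have hpy := Real.sin_sq_add_cos_sq θ
  have hpoly : a^2*(Real.cos θ^2 - Real.sin θ^2) * w a θ + a^4*Real.sin θ^2*Real.cos θ^2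
      = (a^2-1) + (w a θ)^2 := by
    simp only [w]
    linear_combination (a^2*(1-a^2*Real.sin θ^2) + a^4 * Real.sin θ^2) * hpy
  field_simp
  linear_combination (-1) * hpoly +
    ((Real.sqrt (w a θ))^2 + w a θ - a^2*(Real.cos θ^2 - Real.sin θ^2)) * hs2

lemma ibp {a : ℝ} (ha : a^2 < 1) :
    (∫ θ in (0:ℝ)..(π/2),
      ((a^2 - 1) * ((Real.sqrt (w a θ))⁻¹)^3 + Real.sqrt (w a θ))) = 0 := by
  have key := intervalIntegral.integral_eq_sub_of_hasDerivAt
    (f := fun x => a^2 * Real.sin x * Real.cos x * (Real.sqrt (w a x))⁻¹)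
    (fun θ _ => hasDerivAt_g ha θ)
    (((continuous_const.mul (cont_inv_sqrt_w_cube ha)).add cont_sqrt_w).intervalIntegrable 0 (π/2))
  rw [key]
  simp

end EllipticAux
namespace EllipticAux

open intervalIntegral MeasureTheory Metric

lemma abs_lt_of_ball {a x : ℝ} (ha0 : 0 < a) (ha1 : a < 1)
    (hx : x ∈ ball a ((1-a)/2)) : |x| < (1+a)/2 := by
  rw [mem_ball, Real.dist_eq] at hx
  rw [abs_lt] at hx ⊢
  constructor <;> nlinarith [hx.1, hx.2]

lemma sq_lt_one_of_abs {x ρ : ℝ} (hρ : ρ < 1) (h : |x| < ρ) : x^2 < 1 := by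
  have h0 : 0 ≤ |x| := abs_nonneg x
  nlinarith [sq_abs x]

lemma hasDerivAt_sqrt_w {x : ℝ} (hx : x^2 < 1) (θ : ℝ) :
    HasDerivAt (fun y => Real.sqrt (1 - y^2 * Real.sin θ^2))
      (-(x * Real.sin θ^2 * (Real.sqrt (w x θ))⁻¹)) x := by
  have hw := w_pos hx θ
  have hs := sqrt_w_pos hx θ
  have hdw : HasDerivAt (fun y : ℝ => 1 - y^2 * Real.sin θ^2)
      (-(2*x*Real.sin θ^2)) x := by
    have := ((hasDerivAt_pow 2 x).mul_const (Real.sin θ^2)).const_sub 1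
    convert this using 1
    · rfl
    · rfl
    ring
  have := hdw.sqrt (by exact hw.ne')
  convert this using 1
  have : Real.sqrt (1 - x^2*Real.sin θ^2) = Real.sqrt (w x θ) := rfl
  rw [this]
  field_simp

lemma hasDerivAt_inv_sqrt_w {x : ℝ} (hx : x^2 < 1) (θ : ℝ) :
    HasDerivAt (fun y => (Real.sqrt (1 - y^2 * Real.sin θ^2))⁻¹)
      (x * Real.sin θ^2 * ((Real.sqrt (w x θ))⁻¹)^3) x := by
  have hw := w_pos hx θ
  have hs := sqrt_w_pos hx θ
  have hs' : Real.sqrt (1 - x^2*Real.sin θ^2) ≠ 0 := hs.ne'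
  have := (hasDerivAt_sqrt_w hx θ).fun_inv hs'
  convert this using 1
  · rfl
  · rfl
  have hs2 : Real.sqrt (w x θ) ^ 2 = w x θ := sq_sqrt_w hx θ
  have hrw : Real.sqrt (1 - x^2*Real.sin θ^2) = Real.sqrt (w x θ) := rfl
  rw [hrw, neg_neg, div_eq_mul_inv]
  rw [← hs2]
  ring

lemma inv_sqrt_w_le {x ρ : ℝ} (hρ1 : ρ < 1) (h : |x| < ρ) (θ : ℝ) :
    (Real.sqrt (w x θ))⁻¹ ≤ (Real.sqrt (1 - ρ^2))⁻¹ := by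
  have hx2 : x^2 < 1 := sq_lt_one_of_abs hρ1 h
  have hρ2 : ρ^2 < 1 := by nlinarith [abs_nonneg x, sq_abs x]
  have h1 : 1 - ρ^2 ≤ w x θ := by
    have := w_lower (a := x) θ
    have hxρ : x^2 ≤ ρ^2 := by nlinarith [sq_abs x, abs_nonneg x]
    linarith
  have h2 : Real.sqrt (1-ρ^2) ≤ Real.sqrt (w x θ) := Real.sqrt_le_sqrt h1
  have h3 : 0 < Real.sqrt (1-ρ^2) := Real.sqrt_pos.2 (by linarith)
  exact inv_anti₀ h3 h2

end EllipticAux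
namespace EllipticAux

open intervalIntegral MeasureTheory Metric

lemma hasDerivAt_Ec {a : ℝ} (ha0 : 0 < a) (ha1 : a < 1) :
    HasDerivAt Ec (∫ θ in (0:ℝ)..(π/2),
      -(a * Real.sin θ^2 * (Real.sqrt (w a θ))⁻¹)) a := by
  have ha2 : a^2 < 1 := by nlinarith
  set ρ : ℝ := (1+a)/2 with hρ
  have hρ1 : ρ < 1 := by rw [hρ]; linarith
  have hρpos : 0 < 1 - ρ^2 := by nlinarith [hρ1, ha0]
  have hεpos : (0:ℝ) < (1-a)/2 := by linarith
  have key := intervalIntegral.hasDerivAt_integral_of_dominated_loc_of_deriv_le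
    (F := fun x θ => Real.sqrt (1 - x^2 * Real.sin θ^2))
    (F' := fun x θ => -(x * Real.sin θ^2 * (Real.sqrt (w x θ))⁻¹))
    (x₀ := a) (a := 0) (b := π/2) (μ := volume)
    (bound := fun _ => ρ * (Real.sqrt (1 - ρ^2))⁻¹) (Metric.ball_mem_nhds a hεpos) ?_ ?_ ?_ ?_ ?_ ?_
  · exact key.2
  · filter_upwards with x
    exact (Continuous.aestronglyMeasurable (by continuity)).restrict
  · exact (intgE 0 (π/2))
  · apply Continuous.aestronglyMeasurable
    exact ((continuous_const.mul (by continuity)).mul (cont_inv_sqrt_w ha2)).neg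
  · filter_upwards with θ _ x hx
    have habs : |x| < ρ := abs_lt_of_ball ha0 ha1 hx
    have hx2 : x^2 < 1 := sq_lt_one_of_abs hρ1 habs
    rw [Real.norm_eq_abs, abs_neg, abs_mul, abs_mul]
    have h1 : |Real.sin θ^2| ≤ 1 := by
      rw [abs_of_nonneg (sq_nonneg _)]; exact Real.sin_sq_le_one θ
    have h2 : |(Real.sqrt (w x θ))⁻¹| ≤ (Real.sqrt (1-ρ^2))⁻¹ := by
      rw [abs_of_nonneg (inv_nonneg.2 (Real.sqrt_nonneg _))]
      exact inv_sqrt_w_le hρ1 habs θ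
    have h3 : (0:ℝ) < (Real.sqrt (1-ρ^2))⁻¹ :=
      inv_pos.2 (Real.sqrt_pos.2 hρpos)
    calc |x| * |Real.sin θ^2| * |(Real.sqrt (w x θ))⁻¹|
        ≤ ρ * 1 * (Real.sqrt (1-ρ^2))⁻¹ := by
          apply mul_le_mul _ h2 (abs_nonneg _) (by positivity)
          apply mul_le_mul habs.le h1 (abs_nonneg _) (by linarith [habs, abs_nonneg x])
      _ = ρ * (Real.sqrt (1-ρ^2))⁻¹ := by ring
  · exact intervalIntegrable_const
  · filter_upwards with θ _ x hx
    exact hasDerivAt_sqrt_w (sq_lt_one_of_abs hρ1 (abs_lt_of_ball ha0 ha1 hx)) θ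

lemma hasDerivAt_Kc {a : ℝ} (ha0 : 0 < a) (ha1 : a < 1) :
    HasDerivAt Kc (∫ θ in (0:ℝ)..(π/2),
      a * Real.sin θ^2 * ((Real.sqrt (w a θ))⁻¹)^3) a := by
  have ha2 : a^2 < 1 := by nlinarith
  have hKrw : Kc = fun x => ∫ θ in (0:ℝ)..(π/2), (Real.sqrt (1 - x^2 * Real.sin θ^2))⁻¹ := by
    funext x
    unfold Kc
    simp only [one_div]
  rw [hKrw]
  set ρ : ℝ := (1+a)/2 with hρ
  have hρ1 : ρ < 1 := by rw [hρ]; linarith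
  have hρpos : 0 < 1 - ρ^2 := by nlinarith [hρ1, ha0]
  have hεpos : (0:ℝ) < (1-a)/2 := by linarith
  have key := intervalIntegral.hasDerivAt_integral_of_dominated_loc_of_deriv_le
    (F := fun x θ => (Real.sqrt (1 - x^2 * Real.sin θ^2))⁻¹)
    (F' := fun x θ => x * Real.sin θ^2 * ((Real.sqrt (w x θ))⁻¹)^3)
    (x₀ := a) (a := 0) (b := π/2) (μ := volume)
    (bound := fun _ => ρ * ((Real.sqrt (1 - ρ^2))⁻¹)^3) (Metric.ball_mem_nhds a hεpos) ?_ ?_ ?_ ?_ ?_ ?_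
  · exact key.2
  · filter_upwards with x
    apply AEStronglyMeasurable.restrict
    apply Measurable.aestronglyMeasurable
    exact (Continuous.measurable (by continuity)).inv
  · exact (intgK ha2 0 (π/2))
  · apply Continuous.aestronglyMeasurable
    exact (continuous_const.mul (by continuity)).mul (cont_inv_sqrt_w_cube ha2)
  · filter_upwards with θ _ x hx
    have habs : |x| < ρ := abs_lt_of_ball ha0 ha1 hx
    have hx2 : x^2 < 1 := sq_lt_one_of_abs hρ1 habs
    rw [Real.norm_eq_abs, abs_mul, abs_mul]
    have h1 : |Real.sin θ^2| ≤ 1 := by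
      rw [abs_of_nonneg (sq_nonneg _)]; exact Real.sin_sq_le_one θ
    have h2 : |((Real.sqrt (w x θ))⁻¹)^3| ≤ ((Real.sqrt (1-ρ^2))⁻¹)^3 := by
      rw [abs_of_nonneg (by positivity)]
      have := inv_sqrt_w_le hρ1 habs θ
      have h0 : (0:ℝ) ≤ (Real.sqrt (w x θ))⁻¹ := inv_nonneg.2 (Real.sqrt_nonneg _)
      exact pow_le_pow_left₀ h0 this 3
    calc |x| * |Real.sin θ^2| * |((Real.sqrt (w x θ))⁻¹)^3|
        ≤ ρ * 1 * ((Real.sqrt (1-ρ^2))⁻¹)^3 := by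
          apply mul_le_mul _ h2 (abs_nonneg _) (by positivity)
          apply mul_le_mul habs.le h1 (abs_nonneg _) (by linarith [abs_nonneg x])
      _ = ρ * ((Real.sqrt (1-ρ^2))⁻¹)^3 := by ring
  · exact intervalIntegrable_const
  · filter_upwards with θ _ x hx
    exact hasDerivAt_inv_sqrt_w (sq_lt_one_of_abs hρ1 (abs_lt_of_ball ha0 ha1 hx)) θ

end EllipticAux
namespace EllipticAux

open intervalIntegral MeasureTheory

lemma ptw1 {a : ℝ} (ha2 : a^2 < 1) (θ : ℝ) :
    a^2 * Real.sin θ^2 * (Real.sqrt (w a θ))⁻¹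
      = (Real.sqrt (w a θ))⁻¹ - Real.sqrt (w a θ) := by
  have hs := sqrt_w_pos ha2 θ
  have hs2 : Real.sqrt (w a θ)^2 = w a θ := sq_sqrt_w ha2 θ
  have hw : w a θ = 1 - a^2 * Real.sin θ^2 := rfl
  field_simp
  linear_combination hs2 + hw

lemma ptw2 {a : ℝ} (ha2 : a^2 < 1) (θ : ℝ) :
    a^2 * Real.sin θ^2 * ((Real.sqrt (w a θ))⁻¹)^3
      = ((Real.sqrt (w a θ))⁻¹)^3 - (Real.sqrt (w a θ))⁻¹ := by
  have hs := sqrt_w_pos ha2 θ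
  have hs2 : Real.sqrt (w a θ)^2 = w a θ := sq_sqrt_w ha2 θ
  have hw : w a θ = 1 - a^2 * Real.sin θ^2 := rfl
  field_simp
  linear_combination hs2 + hw

lemma hasDerivAt_Ec' {a : ℝ} (ha0 : 0 < a) (ha1 : a < 1) :
    HasDerivAt Ec ((Ec a - Kc a)/a) a := by
  have ha2 : a^2 < 1 := by nlinarith
  have h := hasDerivAt_Ec ha0 ha1
  have heq : (∫ θ in (0:ℝ)..(π/2), -(a * Real.sin θ^2 * (Real.sqrt (w a θ))⁻¹))
      = (Ec a - Kc a)/a := by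
    rw [eq_div_iff ha0.ne', ← intervalIntegral.integral_mul_const, Ec_eq, Kc_eq,
      ← intervalIntegral.integral_sub (intgE 0 (π/2)) (intgK ha2 0 (π/2))]
    apply intervalIntegral.integral_congr
    intro θ _
    simp only
    linear_combination (-1 : ℝ) * ptw1 ha2 θ
  exact heq ▸ h

lemma Ma_eq {a : ℝ} (ha2 : a^2 < 1) :
    (1 - a^2) * (∫ θ in (0:ℝ)..(π/2), ((Real.sqrt (w a θ))⁻¹)^3) = Ec a := by
  have h0 := ibp ha2
  rw [intervalIntegral.integral_add (f := fun θ => (a^2 - 1) * ((Real.sqrt (w a θ))⁻¹)^3)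
    (g := fun θ => Real.sqrt (w a θ))
    ((continuous_const.mul (cont_inv_sqrt_w_cube ha2)).intervalIntegrable 0 (π/2))
    (intgE 0 (π/2)), intervalIntegral.integral_const_mul] at h0
  rw [Ec_eq] at *
  linarith

lemma hasDerivAt_Kc' {a : ℝ} (ha0 : 0 < a) (ha1 : a < 1) :
    HasDerivAt Kc ((Ec a/(1-a^2) - Kc a)/a) a := by
  have ha2 : a^2 < 1 := by nlinarith
  have h := hasDerivAt_Kc ha0 ha1
  have hMa := Ma_eq ha2
  have h1a : (1:ℝ) - a^2 ≠ 0 := by nlinarith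
  have heq : (∫ θ in (0:ℝ)..(π/2), a * Real.sin θ^2 * ((Real.sqrt (w a θ))⁻¹)^3)
      = (Ec a/(1-a^2) - Kc a)/a := by
    have hMa' : Ec a/(1-a^2) = ∫ θ in (0:ℝ)..(π/2), ((Real.sqrt (w a θ))⁻¹)^3 := by
      rw [div_eq_iff h1a]
      linarith [hMa]
    rw [eq_div_iff ha0.ne', ← intervalIntegral.integral_mul_const, hMa', Kc_eq,
      ← intervalIntegral.integral_sub ((cont_inv_sqrt_w_cube ha2).intervalIntegrable 0 (π/2))
        (intgK ha2 0 (π/2))]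
    apply intervalIntegral.integral_congr
    intro θ _
    simp only
    linear_combination ptw2 ha2 θ
  exact heq ▸ h

lemma I_neg {a : ℝ} (ha0 : 0 < a) (ha1 : a < 1) :
    a^2 * Kc a + 2 * Ec a - 2 * Kc a < 0 := by
  have ha2 : a^2 < 1 := by nlinarith
  have h := refl_neg ha0 ha2
  have hcomb : a^2 * Kc a + 2 * Ec a - 2 * Kc a
      = a^2 * ∫ θ in (0:ℝ)..(π/2), (1 - 2*Real.sin θ^2) * (Real.sqrt (w a θ))⁻¹ := by
    have h1 : a^2 * Kc a + 2 * Ec a - 2 * Kc a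
        = ∫ θ in (0:ℝ)..(π/2),
          ((a^2-2) * (Real.sqrt (w a θ))⁻¹ + 2 * Real.sqrt (w a θ)) := by
      rw [intervalIntegral.integral_add ((intgK ha2 0 (π/2)).const_mul _)
        ((intgE 0 (π/2)).const_mul _), intervalIntegral.integral_const_mul,
        intervalIntegral.integral_const_mul, Kc_eq, Ec_eq]
      ring
    rw [h1, ← intervalIntegral.integral_const_mul]
    apply intervalIntegral.integral_congr
    intro θ _
    simp only
    have hs := sqrt_w_pos ha2 θ
    have hs2 : Real.sqrt (w a θ)^2 = w a θ := sq_sqrt_w ha2 θ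
    have hw : w a θ = 1 - a^2 * Real.sin θ^2 := rfl
    field_simp
    linear_combination 2*hs2 + 2*hw
  rw [hcomb]
  exact mul_neg_of_pos_of_neg (by positivity) h

end EllipticAux
namespace EllipticAux

lemma Dneg {a k e dK dE : ℝ} (ha0 : 0 < a) (h1a : (0:ℝ) < 1 - a^2)
    (hkpos : 0 < k) (hB : 0 < k - e) (hEK : 0 < e - (1-a^2)*k)
    (hI : a^2*k + 2*e - 2*k < 0)
    (hdK' : a * (1-a^2) * dK = e - (1-a^2)*k)
    (hdE' : a * dE = e - k) :
    ((2*a) * k + (a^2-2) * dK + 3 * dE) * k + ((a^2-2) * k + 3 * e) * dK < 0 := by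
  have hP : a*(1-a^2)*(((2*a) * k + (a^2-2) * dK + 3 * dE) * k + ((a^2-2) * k + 3 * e) * dK)
      = 3*e^2 + 2*(a^2-2)*k*e + (1-a^2)*k^2 := by
    linear_combination (2*(a^2-2)*k + 3*e) * hdK' + (3*k*(1-a^2)) * hdE'
  set s := Real.sqrt (1 - a^2 + a^4) with hs
  have hsarg : (0:ℝ) < 1 - a^2 + a^4 := by nlinarith
  have hs2 : s^2 = 1 - a^2 + a^4 := Real.sq_sqrt hsarg.le
  have hst : a^2 ≤ s := by
    calc a^2 = Real.sqrt ((a^2)^2) := by rw [Real.sqrt_sq (sq_nonneg a)]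
      _ ≤ Real.sqrt (1 - a^2 + a^4) := Real.sqrt_le_sqrt (by nlinarith)
  have hs1t : 1 - a^2 ≤ s := by
    calc 1 - a^2 = Real.sqrt ((1-a^2)^2) := by rw [Real.sqrt_sq h1a.le]
      _ ≤ Real.sqrt (1 - a^2 + a^4) := Real.sqrt_le_sqrt (by nlinarith)
  have hfac : a^2 * (3*e^2 + 2*(a^2-2)*k*e + (1-a^2)*k^2)
      = (a^2*k - (1+a^2-s)*(k-e)) * (a^2*k - (1+a^2+s)*(k-e)) := by
    linear_combination (k-e)^2 * hs2
  have hplus : 0 < a^2*k - (1+a^2-s)*(k-e) := by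
    nlinarith [mul_le_mul_of_nonneg_right (show 1+a^2-s ≤ 1 by linarith) hB.le]
  have hminus : a^2*k - (1+a^2+s)*(k-e) < 0 := by
    nlinarith [mul_le_mul_of_nonneg_right (show 2 ≤ 1+a^2+s by linarith) hB.le]
  have hPneg : 3*e^2 + 2*(a^2-2)*k*e + (1-a^2)*k^2 < 0 := by
    have h2 := mul_neg_of_pos_of_neg hplus hminus
    rw [← hfac] at h2
    nlinarith [sq_nonneg a]
  nlinarith [mul_pos ha0 h1a]

lemma hasDerivAt_Hfun_neg {a : ℝ} (ha0 : 0 < a) (ha1 : a < 1) :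
    ∃ D, HasDerivAt Hfun D a ∧ D < 0 := by
  have ha2 : a^2 < 1 := by nlinarith
  have hπ : 0 < π := pi_pos
  have hK' := hasDerivAt_Kc' ha0 ha1
  have hE' := hasDerivAt_Ec' ha0 ha1
  have hsq : HasDerivAt (fun α : ℝ => α^2 - 2) (2*a) a := by
    have := (hasDerivAt_pow 2 a).sub_const 2
    convert this using 1
    · rfl
    · rfl
    simp
  have h1 : HasDerivAt (fun α => (α^2 - 2) * Kc α + 3 * Ec α)
      ((2*a) * Kc a + (a^2-2) * ((Ec a/(1-a^2) - Kc a)/a)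
        + 3 * ((Ec a - Kc a)/a)) a :=
    (hsq.mul hK').add (hE'.const_mul 3)
  have hH : HasDerivAt Hfun
      (((2*a) * Kc a + (a^2-2) * ((Ec a/(1-a^2) - Kc a)/a) + 3 * ((Ec a - Kc a)/a)) * Kc a
        + ((a^2-2) * Kc a + 3 * Ec a) * ((Ec a/(1-a^2) - Kc a)/a)) a := h1.mul hK'
  refine ⟨_, hH, ?_⟩
  have h1a : (0:ℝ) < 1 - a^2 := by linarith
  apply Dneg ha0 h1a (lt_of_lt_of_le (by positivity) (Kc_ge ha2))
    (K_sub_E_pos ha0 ha2) (E_sub_K_pos ha0 ha2) (I_neg ha0 ha1)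
  · field_simp
  · field_simp

end EllipticAux
namespace EllipticAux

lemma Hfun_zero : Hfun 0 = π^2/4 := by
  have hK : Kc 0 = π/2 := by
    unfold Kc
    norm_num
  have hE : Ec 0 = π/2 := by
    unfold Ec
    norm_num
  unfold Hfun
  rw [hK, hE]
  ring

lemma strictAnti_Hfun : StrictAntiOn Hfun (Set.Ioo 0 1) := by
  apply strictAntiOn_of_deriv_neg (convex_Ioo 0 1)
  · intro x hx
    obtain ⟨D, hD, _⟩ := hasDerivAt_Hfun_neg hx.1 hx.2
    exact hD.continuousAt.continuousWithinAt
  · rw [interior_Ioo]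
    intro x hx
    obtain ⟨D, hD, hDneg⟩ := hasDerivAt_Hfun_neg hx.1 hx.2
    rw [hD.deriv]
    exact hDneg

end EllipticAux
namespace EllipticAux

open intervalIntegral MeasureTheory Filter

lemma Ec_nonneg (a : ℝ) : 0 ≤ Ec a := by
  unfold Ec
  apply intervalIntegral.integral_nonneg (by positivity)
  intro θ _
  exact Real.sqrt_nonneg _

lemma arsinh_integral {c : ℝ} (hc : 0 < c) :
    (∫ θ in (0:ℝ)..(π/2), (Real.sqrt (c^2 + (π/2 - θ)^2))⁻¹)
      = Real.arsinh ((π/2)/c) := by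
  have hcont : Continuous (fun θ : ℝ => (Real.sqrt (c^2 + (π/2 - θ)^2))⁻¹) := by
    apply Continuous.inv₀ (by continuity)
    intro θ
    positivity
  have key : ∀ θ ∈ Set.uIcc (0:ℝ) (π/2),
      HasDerivAt (fun θ : ℝ => -Real.arsinh ((π/2 - θ)/c))
        ((Real.sqrt (c^2 + (π/2 - θ)^2))⁻¹) θ := by
    intro θ _
    have hinner : HasDerivAt (fun θ : ℝ => (π/2 - θ)/c) (-(1/c)) θ := by
      have := ((hasDerivAt_id θ).const_sub (π/2)).div_const c
      convert this using 1
      · rfl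
      · rfl
      · rfl
      ring
    have h2 := ((Real.hasDerivAt_arsinh _).comp θ hinner).fun_neg
    convert h2 using 1
    · rfl
    · rfl
    · rfl
    have hx : Real.sqrt (1 + ((π/2-θ)/c)^2) * c = Real.sqrt (c^2 + (π/2-θ)^2) := by
      rw [← Real.sqrt_sq hc.le, ← Real.sqrt_mul (by positivity)]
      congr 1
      field_simp
      rw [Real.sq_sqrt (sq_nonneg c)]
    rw [← hx]
    have h3 : Real.sqrt (1 + ((π/2-θ)/c)^2) > 0 := by positivity
    field_simp
  rw [intervalIntegral.integral_eq_sub_of_hasDerivAt key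
    (hcont.intervalIntegrable 0 (π/2))]
  norm_num

lemma Kc_lower {a : ℝ} (ha0 : 0 < a) (ha1 : a < 1) :
    Real.arsinh ((π/2)/Real.sqrt (1-a^2)) ≤ Kc a := by
  have ha2 : a^2 < 1 := by nlinarith
  have h1a : (0:ℝ) < 1 - a^2 := by linarith
  have hc : 0 < Real.sqrt (1-a^2) := Real.sqrt_pos.2 h1a
  have hc2 : Real.sqrt (1-a^2)^2 = 1 - a^2 := Real.sq_sqrt h1a.le
  rw [← arsinh_integral hc, Kc_eq]
  apply intervalIntegral.integral_mono_on (by positivity)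
  · apply Continuous.intervalIntegrable
    apply Continuous.inv₀ (by continuity)
    intro θ
    have : (0:ℝ) < Real.sqrt (1-a^2)^2 + (π/2-θ)^2 := by positivity
    positivity
  · exact intgK ha2 0 (π/2)
  · intro θ hθ
    have hwle : w a θ ≤ Real.sqrt (1-a^2)^2 + (π/2 - θ)^2 := by
      rw [hc2]
      have hcos : Real.cos θ ≤ π/2 - θ := by
        rw [← Real.sin_pi_div_two_sub]
        exact Real.sin_le (by linarith [hθ.2])
      have hcosnn : 0 ≤ Real.cos θ := Real.cos_nonneg_of_mem_Icc ⟨by linarith [hθ.1, pi_pos], hθ.2⟩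
      have hpy := Real.sin_sq_add_cos_sq θ
      have hcos2 : Real.cos θ^2 ≤ (π/2-θ)^2 := by nlinarith
      simp only [w]
      nlinarith [sq_nonneg a, sq_nonneg (Real.cos θ)]
    have hs1 : Real.sqrt (w a θ) ≤ Real.sqrt (Real.sqrt (1-a^2)^2 + (π/2-θ)^2) :=
      Real.sqrt_le_sqrt hwle
    exact inv_anti₀ (sqrt_w_pos ha2 θ) hs1

lemma tendsto_Kc_atTop :
    Tendsto Kc (nhdsWithin 1 (Set.Ioo (0:ℝ) 1)) atTop := by
  have h1 : Tendsto (fun a : ℝ => 1 - a^2) (nhdsWithin 1 (Set.Ioo (0:ℝ) 1))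
      (nhdsWithin 0 (Set.Ioi (0:ℝ))) := by
    apply tendsto_nhdsWithin_of_tendsto_nhds_of_eventually_within
    · have hcont : Continuous (fun a : ℝ => 1 - a^2) := by continuity
      have h := (hcont.tendsto 1).mono_left
        (nhdsWithin_le_nhds (s := Set.Ioo (0:ℝ) 1))
      simpa using h
    · filter_upwards [self_mem_nhdsWithin] with a ha
      have : a^2 < 1 := by nlinarith [ha.1, ha.2]
      simp only [Set.mem_Ioi]
      linarith
  have h2 : Tendsto Real.sqrt (nhdsWithin 0 (Set.Ioi (0:ℝ)))
      (nhdsWithin 0 (Set.Ioi (0:ℝ))) := by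
    apply tendsto_nhdsWithin_of_tendsto_nhds_of_eventually_within
    · have h := (Real.continuous_sqrt.tendsto 0).mono_left
        (nhdsWithin_le_nhds (s := Set.Ioi (0:ℝ)))
      simpa using h
    · filter_upwards [self_mem_nhdsWithin] with x hx
      exact Set.mem_Ioi.2 (Real.sqrt_pos.2 hx)
  have h3 : Tendsto (fun a : ℝ => (π/2) * (Real.sqrt (1 - a^2))⁻¹)
      (nhdsWithin 1 (Set.Ioo (0:ℝ) 1)) atTop := by
    apply Tendsto.const_mul_atTop (by positivity)
    exact tendsto_inv_nhdsGT_zero.comp (h2.comp h1)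
  have h4 : Tendsto (fun a : ℝ => Real.log ((π/2) * (Real.sqrt (1 - a^2))⁻¹))
      (nhdsWithin 1 (Set.Ioo (0:ℝ) 1)) atTop := Real.tendsto_log_atTop.comp h3
  apply tendsto_atTop_mono' _ _ h4
  filter_upwards [self_mem_nhdsWithin] with a ha
  have ha2 : a^2 < 1 := by nlinarith [ha.1, ha.2]
  have h1a : (0:ℝ) < 1 - a^2 := by linarith
  have hc : 0 < Real.sqrt (1-a^2) := Real.sqrt_pos.2 h1a
  have hy : 0 < (π/2) * (Real.sqrt (1-a^2))⁻¹ := by positivity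
  calc Real.log ((π/2) * (Real.sqrt (1-a^2))⁻¹)
      ≤ Real.arsinh ((π/2) * (Real.sqrt (1-a^2))⁻¹) := by
        rw [Real.arsinh]
        apply Real.log_le_log hy
        nlinarith [Real.sqrt_nonneg (1 + ((π/2) * (Real.sqrt (1-a^2))⁻¹)^2)]
    _ ≤ Kc a := by
        have := Kc_lower ha.1 ha.2
        rwa [div_eq_mul_inv] at this

lemma tendsto_Hfun_atBot :
    Tendsto Hfun (nhdsWithin 1 (Set.Ioo (0:ℝ) 1)) atBot := by
  have hK := tendsto_Kc_atTop
  have hg : Tendsto (fun a : ℝ => (π/2) * (3*(π/2) - Kc a))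
      (nhdsWithin 1 (Set.Ioo (0:ℝ) 1)) atBot := by
    apply Tendsto.const_mul_atBot (by positivity)
    have hneg : Tendsto (fun a : ℝ => -Kc a) (nhdsWithin 1 (Set.Ioo (0:ℝ) 1)) atBot :=
      tendsto_neg_atTop_atBot.comp hK
    have := tendsto_atBot_add_const_left _ (3*(π/2)) hneg
    simpa [sub_eq_add_neg] using this
  apply tendsto_atBot_mono' _ _ hg
  filter_upwards [self_mem_nhdsWithin, hK.eventually_ge_atTop (3*(π/2))] with a ha hKa
  have ha2 : a^2 < 1 := by nlinarith [ha.1, ha.2]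
  have hKπ : π/2 ≤ Kc a := Kc_ge ha2
  have hE : Ec a ≤ π/2 := Ec_le a
  have hE0 : 0 ≤ Ec a := Ec_nonneg a
  have hk0 : 0 < Kc a := by linarith [pi_pos]
  unfold Hfun
  nlinarith [mul_nonneg (sub_nonneg.2 hKa) (sub_nonneg.2 hKπ),
    mul_nonneg (mul_nonneg (sub_nonneg.2 ha2.le) hk0.le) hk0.le,
    mul_nonneg (sub_nonneg.2 hE) hk0.le,
    mul_pos hk0 hk0]

end EllipticAux
theorem stmt11 :
    Hfun 0 = π ^ 2 / 4 ∧ StrictAntiOn Hfun (Set.Ioo 0 1) ∧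
    Filter.Tendsto Hfun (nhdsWithin 1 (Set.Ioo 0 1)) Filter.atBot := by
  exact ⟨EllipticAux.Hfun_zero, EllipticAux.strictAnti_Hfun, EllipticAux.tendsto_Hfun_atBot⟩
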